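/- Consider n robots on a finite undirected graph G on Fin n, with symmetric gains a_{ij} = a_{ji} ≥ 0 and b_{ij} = b_{ji}, constant delay T > 0, scattering parameter σ > 0, constant reference q_r ∈ ℝ², nonempty accessible set V_h ⊆ Fin n with m = |V_h| elements, δ_i the indicator of V_h, and continuous input u_h : ℝ → ℝ². For each ordered pair (i,j) with j a neighbor of i, let r^q_{ij}, r^ξ_{ij} : ℝ → ℝ² be continuous, set r_{ij} = (r^q_{ij}, r^ξ_{ij}), r̄_{ij} = (r^q_{ij} − q_r, r^ξ_{ij}), p_{ij} = M_{ij}(r_{ij} − (q_i, ξ_i)) with M_{ij}(x₁,x₂) = (a_{ij}x₁ − b_{ij}x₂, b_{ij}x₁), and suppose the scattering transmission relations hold for all t: (1/√(2σ))(p_{ji}(t) + σ r̄_{ji}(t)) = (1/√(2σ))(−p_{ij}(t−T) + σ r̄_{ij}(t−T)) and (1/√(2σ))(−p_{ij}(t) − σ r̄_{ij}(t)) = (1/√(2σ))(p_{ji}(t−T) − σ r̄_{ji}(t−T)). Suppose q_i, ξ_i : ℝ → ℝ² are differentiable and satisfy ξ̇_i = Σ_j b_{ij}(r^q_{ij} −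 q_i), q̇_i = Σ_j a_{ij}(r^q_{ij} − q_i) − Σ_j b_{ij}(r^ξ_{ij} − ξ_i) + δ_i u_h. Define the total storage S(t) = (1/m) Σ_i [½‖q_i(t)−q_r‖² + ½‖ξ_i(t)‖²] + (1/m) Σ_{edges (i,j)} [½∫_{t−T}^{t}‖(1/√(2σ))(−p_{ij}+σr̄_{ij})(τ)‖²dτ + ½∫_{t−T}^{t}‖(1/√(2σ))(p_{ji}−σr̄_{ji})(τ)‖²dτ], and z̄(t) = (1/m)Σ_{i∈V_h} q_i(t) − q_r. Then S is differentiable with S'(t) = −(1/m) Σ_i Σ_j a_{ij} ‖q_i(t) − r^q_{ij}(t)‖² + ⟨z̄(t), u_h(t)⟩ ≤ ⟨z̄(t), u_h(t)⟩; i.e., the delayed robotic network is passive from u_h to z̄. -/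

import Mathlib

open RealInnerProductSpace

/-!
Each robot's energy `½‖qᵢ - q_r‖² + ½‖ξᵢ‖²` changes at the rate `Σⱼ sᵢⱼ + δᵢ⟪qᵢ - q_r, u_h⟫`,
where `sᵢⱼ` is its supply along the pair `(i, j)`. The scattering transformation makes every
channel lossless: the transmission relations say that the waves leaving a channel at time `t - T`
are the waves entering it at `t`, so the wave energy stored in the channel of the edge `{i, j}`
changes at the rate `-pᵢⱼ·r̄ᵢⱼ - pⱼᵢ·r̄ⱼᵢ`. For each ordered pair, `sᵢⱼ - pᵢⱼ·r̄ᵢⱼ` is exactly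
`-aᵢⱼ‖qᵢ - r^q_{ij}‖²`, and the human-input terms average to `⟪z̄, u_h⟫`.
-/

theorem Continuous.hasDerivAt_integral_window {E : Type*} [NormedAddCommGroup E]
    [NormedSpace ℝ E] [CompleteSpace E] {f : ℝ → E} (hf : Continuous f) (T t : ℝ) :
    HasDerivAt (fun u => ∫ τ in (u - T)..u, f τ) (f t - f (t - T)) t := by
  have hF := fun s => (hf.integral_hasStrictDerivAt 0 s).hasDerivAt
  have hshift := (hF (t - T)).comp_sub_const t T
  refine ((hF t).sub hshift).congr_of_eventuallyEq (.of_forall fun u => ?_)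
  exact (intervalIntegral.integral_interval_sub_left (hf.intervalIntegrable _ _)
    (hf.intervalIntegrable _ _)).symm

theorem Finset.sum_add_swap_eq_sum_sum {α M : Type*} [Fintype α] [AddCommMonoid M]
    {E : Finset (α × α)} (hE : ∀ e ∈ E, e.swap ∉ E) (f : α → α → M)
    (hf : ∀ i j, (i, j) ∉ E → (j, i) ∉ E → f i j = 0) :
    ∑ e ∈ E, (f e.1 e.2 + f e.2 e.1) = ∑ i, ∑ j, f i j := by
  have hdisj : Disjoint E (E.map (Equiv.prodComm α α).toEmbedding) := by
    simpa [Finset.disjoint_left] using fun a b h h' => hE (b, a) h' h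
  have hswap : ∑ e ∈ E, f e.2 e.1 = ∑ e ∈ E.map (Equiv.prodComm α α).toEmbedding, f e.1 e.2 := by
    simp
  rw [← Fintype.sum_prod_type', sum_add_distrib, hswap, ← sum_disjUnion hdisj]
  refine sum_subset (subset_univ _) fun e _ he => ?_
  simp only [mem_disjUnion, mem_map_equiv, not_or] at he
  exact hf _ _ he.1 he.2

section

variable {F : Type*} [NormedAddCommGroup F]

-- The Euclidean squared norm on `F × F` (Mathlib's norm on a product is the sup norm).
def prodNormSq (x : F × F) : ℝ := ‖x.1‖ ^ 2 + ‖x.2‖ ^ 2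

theorem prodNormSq_neg (x : F × F) : prodNormSq (-x) = prodNormSq x := by
  simp [prodNormSq]

theorem continuous_prodNormSq : Continuous (prodNormSq : F × F → ℝ) := by
  unfold prodNormSq; fun_prop

variable [InnerProductSpace ℝ F]

def portPower (p r : F × F) : ℝ := ⟪p.1, r.1⟫ + ⟪p.2, r.2⟫

theorem HasDerivAt.half_norm_sq {f : ℝ → F} {f' : F} {t : ℝ} (hf : HasDerivAt f f' t) :
    HasDerivAt (fun u => 1 / 2 * ‖f u‖ ^ 2) ⟪f t, f'⟫ t := by
  simpa using hf.norm_sq.const_mul (1 / 2 : ℝ)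

theorem half_norm_sq_scattering_sub {σ : ℝ} (hσ : 0 < σ) (u v : F) :
    1 / 2 * ‖(1 / √(2 * σ)) • (-u + σ • v)‖ ^ 2 - 1 / 2 * ‖(1 / √(2 * σ)) • (u + σ • v)‖ ^ 2
      = -⟪u, v⟫ := by
  have hc : (1 / √(2 * σ)) ^ 2 = 1 / (2 * σ) := by
    rw [div_pow, one_pow, Real.sq_sqrt (by positivity)]
  rw [norm_smul, norm_smul, mul_pow, mul_pow, Real.norm_eq_abs, sq_abs, hc,
    neg_add_eq_sub, norm_sub_sq_real, norm_add_sq_real, real_inner_smul_left,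
    real_inner_smul_right, real_inner_comm]
  field_simp
  ring

theorem half_prodNormSq_scattering_sub {σ : ℝ} (hσ : 0 < σ) (u v : F × F) :
    1 / 2 * prodNormSq ((1 / √(2 * σ)) • (-u + σ • v))
      - 1 / 2 * prodNormSq ((1 / √(2 * σ)) • (u + σ • v)) = -portPower u v := by
  simp only [prodNormSq, portPower, Prod.smul_fst, Prod.smul_snd, Prod.fst_add, Prod.snd_add,
    Prod.fst_neg, Prod.snd_neg]
  linarith [half_norm_sq_scattering_sub hσ u.1 v.1, half_norm_sq_scattering_sub hσ u.2 v.2]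

theorem hasDerivAt_channel_storage {σ T t : ℝ} (hσ : 0 < σ) {p₁ r₁ p₂ r₂ : ℝ → F × F}
    (hp₁ : Continuous p₁) (hr₁ : Continuous r₁) (hp₂ : Continuous p₂) (hr₂ : Continuous r₂)
    (h₁ : (1 / √(2 * σ)) • (p₂ t + σ • r₂ t)
      = (1 / √(2 * σ)) • (-p₁ (t - T) + σ • r₁ (t - T)))
    (h₂ : (1 / √(2 * σ)) • (-p₁ t - σ • r₁ t)
      = (1 / √(2 * σ)) • (p₂ (t - T) - σ • r₂ (t - T))) :
    HasDerivAt (fun u =>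
        1 / 2 * (∫ τ in (u - T)..u, prodNormSq ((1 / √(2 * σ)) • (-p₁ τ + σ • r₁ τ)))
          + 1 / 2 * (∫ τ in (u - T)..u, prodNormSq ((1 / √(2 * σ)) • (p₂ τ - σ • r₂ τ))))
      (-(portPower (p₁ t) (r₁ t) + portPower (p₂ t) (r₂ t))) t := by
  have hW₁ : Continuous fun τ => prodNormSq ((1 / √(2 * σ)) • (-p₁ τ + σ • r₁ τ)) :=
    continuous_prodNormSq.comp (by fun_prop)
  have hW₂ : Continuous fun τ => prodNormSq ((1 / √(2 * σ)) • (p₂ τ - σ • r₂ τ)) :=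
    continuous_prodNormSq.comp (by fun_prop)
  refine (((hW₁.hasDerivAt_integral_window T t).const_mul (1 / 2)).add
    ((hW₂.hasDerivAt_integral_window T t).const_mul (1 / 2))).congr_deriv ?_
  have hflip : ∀ x y : F × F,
      prodNormSq ((1 / √(2 * σ)) • (x - y)) = prodNormSq ((1 / √(2 * σ)) • (-x + y)) := by
    intro x y
    rw [← prodNormSq_neg, ← smul_neg, neg_sub, neg_add_eq_sub]
  -- the waves leaving the channel at `t - T` are the waves entering it at `t`
  rw [← h₁, ← h₂, hflip, hflip, neg_neg]
  linarith [half_prodNormSq_scattering_sub hσ (p₁ t) (r₁ t),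
    half_prodNormSq_scattering_sub hσ (p₂ t) (r₂ t)]

theorem hasDerivAt_robot_storage {ι : Type*} [Fintype ι] {q ξ : ℝ → F} {qr u : F} {δ : ℝ}
    {a b : ι → ℝ} {x y : ι → F} {t : ℝ}
    (hq : HasDerivAt q (∑ j, a j • x j - ∑ j, b j • y j + δ • u) t)
    (hξ : HasDerivAt ξ (∑ j, b j • x j) t) :
    HasDerivAt (fun s => 1 / 2 * ‖q s - qr‖ ^ 2 + 1 / 2 * ‖ξ s‖ ^ 2)
      (∑ j, (⟪q t - qr, a j • x j - b j • y j⟫ + ⟪ξ t, b j • x j⟫) + δ * ⟪q t - qr, u⟫) t := by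
  refine ((hq.sub_const qr).half_norm_sq.add hξ.half_norm_sq).congr_deriv ?_
  simp only [inner_add_right, inner_sub_right, inner_sum, real_inner_smul_right,
    Finset.sum_add_distrib, Finset.sum_sub_distrib]
  ring

theorem robot_supply_sub_portPower {a b : ℝ} {q ξ qr rq rξ : F} {p r : F × F}
    (hp : p = (a • (rq - q) - b • (rξ - ξ), b • (rq - q))) (hr : r = (rq - qr, rξ)) :
    ⟪q - qr, a • (rq - q) - b • (rξ - ξ)⟫ + ⟪ξ, b • (rq - q)⟫ - portPower p r
      = -(a * ‖q - rq‖ ^ 2) := by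
  obtain ⟨x, rfl⟩ : ∃ x, rq = x + q := ⟨rq - q, (sub_add_cancel _ _).symm⟩
  obtain ⟨y, rfl⟩ : ∃ y, rξ = y + ξ := ⟨rξ - ξ, (sub_add_cancel _ _).symm⟩
  rw [hp, hr, norm_sub_rev, add_sub_cancel_right, add_sub_cancel_right, add_sub_assoc x]
  generalize q - qr = w
  simp only [portPower, inner_sub_left, inner_sub_right, inner_add_right, real_inner_smul_left,
    real_inner_smul_right, real_inner_self_eq_norm_sq]
  linear_combination a * real_inner_comm x w + b * real_inner_comm w y
    + b * real_inner_comm x ξ + b * real_inner_comm x y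

theorem inner_average_sub {ι : Type*} {s : Finset ι} (hs : s.Nonempty) (x : ι → F) (c u : F) :
    ⟪(1 / (s.card : ℝ)) • ∑ i ∈ s, x i - c, u⟫ = 1 / (s.card : ℝ) * ∑ i ∈ s, ⟪x i - c, u⟫ := by
  have hcard : (s.card : ℝ) ≠ 0 := by exact_mod_cast hs.card_pos.ne'
  rw [← sum_inner, ← real_inner_smul_left, Finset.sum_sub_distrib, Finset.sum_const,
    ← Nat.cast_smul_eq_nsmul ℝ, smul_sub, smul_smul, one_div_mul_cancel hcard, one_smul]

end

theorem stmt_7_general {n : ℕ} (G : SimpleGraph (Fin n))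
    (a b : Fin n → Fin n → ℝ)
    (ha : ∀ i j, 0 ≤ a i j)
    (hoff : ∀ i j, ¬G.Adj i j → a i j = 0 ∧ b i j = 0)
    (T σ : ℝ) (hσ : 0 < σ)
    (qr : EuclideanSpace ℝ (Fin 2))
    (Vh : Finset (Fin n)) (hVh : Vh.Nonempty) (m : ℕ) (hm : m = Vh.card)
    (δ : Fin n → ℝ) (hδ : ∀ i, δ i = if i ∈ Vh then 1 else 0)
    (uh : ℝ → EuclideanSpace ℝ (Fin 2))
    (rq rξ : Fin n → Fin n → ℝ → EuclideanSpace ℝ (Fin 2))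
    (hrq : ∀ i j, Continuous (rq i j)) (hrξ : ∀ i j, Continuous (rξ i j))
    (q ξ : Fin n → ℝ → EuclideanSpace ℝ (Fin 2))
    -- the delayed cooperative dynamics
    (hξdyn : ∀ i t, HasDerivAt (ξ i) (∑ j, b i j • (rq i j t - q i t)) t)
    (hqdyn : ∀ i t, HasDerivAt (q i)
      (∑ j, a i j • (rq i j t - q i t) - ∑ j, b i j • (rξ i j t - ξ i t) + δ i • uh t) t)
    -- `p_{ij} = M_{ij}(r_{ij} − (qᵢ, ξᵢ))` with `M_{ij}(x₁,x₂) = (aᵢⱼx₁ − bᵢⱼx₂, bᵢⱼx₁)`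
    (p : Fin n → Fin n → ℝ → EuclideanSpace ℝ (Fin 2) × EuclideanSpace ℝ (Fin 2))
    (hp : ∀ i j t, p i j t
      = (a i j • (rq i j t - q i t) - b i j • (rξ i j t - ξ i t),
         b i j • (rq i j t - q i t)))
    -- `r̄_{ij} = (r^q_{ij} − q_r, r^ξ_{ij})`
    (rbar : Fin n → Fin n → ℝ → EuclideanSpace ℝ (Fin 2) × EuclideanSpace ℝ (Fin 2))
    (hrbar : ∀ i j t, rbar i j t = (rq i j t - qr, rξ i j t))
    -- scattering transmission relations along each edge
    (htrans1 : ∀ i j, G.Adj i j → ∀ t : ℝ,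
      (1 / Real.sqrt (2 * σ)) • (p j i t + σ • rbar j i t)
        = (1 / Real.sqrt (2 * σ)) • (-p i j (t - T) + σ • rbar i j (t - T)))
    (htrans2 : ∀ i j, G.Adj i j → ∀ t : ℝ,
      (1 / Real.sqrt (2 * σ)) • (-p i j t - σ • rbar i j t)
        = (1 / Real.sqrt (2 * σ)) • (p j i (t - T) - σ • rbar j i (t - T)))
    -- an orientation of the edge set: each undirected edge of `G` appears exactly once
    (E : Finset (Fin n × Fin n))
    (hE : ∀ i j, G.Adj i j ↔ ((i, j) ∈ E ∨ (j, i) ∈ E))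
    (hE1 : ∀ e ∈ E, (e.2, e.1) ∉ E)
    -- the total storage function
    (S : ℝ → ℝ)
    (hS : ∀ t, S t
      = (1 / (m : ℝ)) * ∑ i, (1 / 2 * ‖q i t - qr‖ ^ 2 + 1 / 2 * ‖ξ i t‖ ^ 2)
        + (1 / (m : ℝ)) * ∑ e ∈ E,
            (1 / 2 * (∫ τ in (t - T)..t,
                (‖((1 / Real.sqrt (2 * σ)) • (-p e.1 e.2 τ + σ • rbar e.1 e.2 τ)).1‖ ^ 2
                  + ‖((1 / Real.sqrt (2 * σ)) • (-p e.1 e.2 τ + σ • rbar e.1 e.2 τ)).2‖ ^ 2))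
              + 1 / 2 * (∫ τ in (t - T)..t,
                (‖((1 / Real.sqrt (2 * σ)) • (p e.2 e.1 τ - σ • rbar e.2 e.1 τ)).1‖ ^ 2
                  + ‖((1 / Real.sqrt (2 * σ)) • (p e.2 e.1 τ - σ • rbar e.2 e.1 τ)).2‖ ^ 2))))
    -- the shifted average position of the accessible robots
    (zbar : ℝ → EuclideanSpace ℝ (Fin 2))
    (hz : ∀ t, zbar t = (1 / (m : ℝ)) • ∑ i ∈ Vh, q i t - qr) :
    ∀ t, HasDerivAt S
        (-(1 / (m : ℝ)) * ∑ i, ∑ j, a i j * ‖q i t - rq i j t‖ ^ 2 + ⟪zbar t, uh t⟫) t ∧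
      -(1 / (m : ℝ)) * ∑ i, ∑ j, a i j * ‖q i t - rq i j t‖ ^ 2 + ⟪zbar t, uh t⟫
        ≤ ⟪zbar t, uh t⟫ := by
  intro t
  have hcont_q : ∀ i, Continuous (q i) := fun i =>
    Differentiable.continuous fun s => (hqdyn i s).differentiableAt
  have hcont_ξ : ∀ i, Continuous (ξ i) := fun i =>
    Differentiable.continuous fun s => (hξdyn i s).differentiableAt
  have hcont_p : ∀ i j, Continuous (p i j) := fun i j => by
    have := hcont_q i; have := hcont_ξ i; have := hrq i j; have := hrξ i j
    rw [funext (hp i j)]; fun_prop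
  have hcont_rbar : ∀ i j, Continuous (rbar i j) := fun i j => by
    have := hrq i j; have := hrξ i j
    rw [funext (hrbar i j)]; fun_prop
  have hports : ∑ e ∈ E, (portPower (p e.1 e.2 t) (rbar e.1 e.2 t)
      + portPower (p e.2 e.1 t) (rbar e.2 e.1 t)) = ∑ i, ∑ j, portPower (p i j t) (rbar i j t) := by
    refine Finset.sum_add_swap_eq_sum_sum hE1 (fun i j => portPower (p i j t) (rbar i j t))
      fun i j hij hji => ?_
    obtain ⟨ha0, hb0⟩ := hoff i j fun h => ((hE i j).1 h).elim hij hji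
    simp [hp, portPower, ha0, hb0]
  have hnet := Finset.sum_congr rfl fun i (_ : i ∈ Finset.univ) =>
    Finset.sum_congr rfl fun j (_ : j ∈ Finset.univ) =>
      robot_supply_sub_portPower (hp i j t) (hrbar i j t)
  simp only [Finset.sum_sub_distrib, Finset.sum_neg_distrib] at hnet
  have hhuman : 1 / (m : ℝ) * ∑ i, δ i * ⟪q i t - qr, uh t⟫ = ⟪zbar t, uh t⟫ := by
    simp only [hz, hm, inner_average_sub hVh, hδ, ite_mul, one_mul, zero_mul,
      Finset.sum_ite_mem, Finset.univ_inter]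
  have hdissipation : 0 ≤ 1 / (m : ℝ) * ∑ i, ∑ j, a i j * ‖q i t - rq i j t‖ ^ 2 :=
    mul_nonneg (by positivity) (Finset.sum_nonneg fun i _ => Finset.sum_nonneg fun j _ =>
      mul_nonneg (ha i j) (sq_nonneg _))
  have hrobots := HasDerivAt.fun_sum (u := Finset.univ) fun i _ =>
    hasDerivAt_robot_storage (qr := qr) (hqdyn i t) (hξdyn i t)
  have hchannels := HasDerivAt.fun_sum fun e (he : e ∈ E) =>
    have hadjE := (hE e.1 e.2).2 (.inl he)
    hasDerivAt_channel_storage hσ (hcont_p _ _) (hcont_rbar _ _) (hcont_p _ _) (hcont_rbar _ _)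
      (htrans1 _ _ hadjE t) (htrans2 _ _ hadjE t)
  refine ⟨?_, by linarith⟩
  rw [funext hS]
  refine ((hrobots.const_mul _).add (hchannels.const_mul _)).congr_deriv ?_
  rw [Finset.sum_neg_distrib, hports, Finset.sum_add_distrib, mul_add, hhuman]
  linear_combination (1 / (m : ℝ)) * hnet

/-- Passivity of the delayed robotic network from the human input `u_h` to
the shifted average position `z̄` of the accessible robots: with dynamics
`ξ̇ᵢ = Σⱼ bᵢⱼ(r^q_{ij} − qᵢ)`, `q̇ᵢ = Σⱼ aᵢⱼ(r^q_{ij} − qᵢ) − Σⱼ bᵢⱼ(r^ξ_{ij} − ξᵢ) + δᵢu_h`,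
scattering transmission relations along each edge with delay `T`, and total storage
`S = (1/m)Σᵢ[½‖qᵢ−q_r‖² + ½‖ξᵢ‖²] + (1/m)Σ_edges[channel storage]`, one has
`S' = −(1/m)ΣᵢΣⱼ aᵢⱼ‖qᵢ − r^q_{ij}‖² + ⟨z̄, u_h⟩ ≤ ⟨z̄, u_h⟩`.
The squared Euclidean norm on `ℝ²×ℝ²` is written componentwise as `‖·.1‖² + ‖·.2‖²`. -/
theorem stmt_7 {n : ℕ} (G : SimpleGraph (Fin n))
    (a b : Fin n → Fin n → ℝ)
    (hsym_a : ∀ i j, a i j = a j i) (hsym_b : ∀ i j, b i j = b j i)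
    (ha : ∀ i j, 0 ≤ a i j)
    (hadj : ∀ i j, G.Adj i j ↔ 0 < a i j)
    (hoff : ∀ i j, ¬G.Adj i j → a i j = 0 ∧ b i j = 0)
    (T σ : ℝ) (hT : 0 < T) (hσ : 0 < σ)
    (qr : EuclideanSpace ℝ (Fin 2))
    (Vh : Finset (Fin n)) (hVh : Vh.Nonempty) (m : ℕ) (hm : m = Vh.card)
    (δ : Fin n → ℝ) (hδ : ∀ i, δ i = if i ∈ Vh then 1 else 0)
    (uh : ℝ → EuclideanSpace ℝ (Fin 2)) (huh : Continuous uh)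
    (rq rξ : Fin n → Fin n → ℝ → EuclideanSpace ℝ (Fin 2))
    (hrq : ∀ i j, Continuous (rq i j)) (hrξ : ∀ i j, Continuous (rξ i j))
    (q ξ : Fin n → ℝ → EuclideanSpace ℝ (Fin 2))
    -- the delayed cooperative dynamics
    (hξdyn : ∀ i t, HasDerivAt (ξ i) (∑ j, b i j • (rq i j t - q i t)) t)
    (hqdyn : ∀ i t, HasDerivAt (q i)
      (∑ j, a i j • (rq i j t - q i t) - ∑ j, b i j • (rξ i j t - ξ i t) + δ i • uh t) t)
    -- `p_{ij} = M_{ij}(r_{ij} − (qᵢ, ξᵢ))` with `M_{ij}(x₁,x₂) = (aᵢⱼx₁ − bᵢⱼx₂, bᵢⱼx₁)`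
    (p : Fin n → Fin n → ℝ → EuclideanSpace ℝ (Fin 2) × EuclideanSpace ℝ (Fin 2))
    (hp : ∀ i j t, p i j t
      = (a i j • (rq i j t - q i t) - b i j • (rξ i j t - ξ i t),
         b i j • (rq i j t - q i t)))
    -- `r̄_{ij} = (r^q_{ij} − q_r, r^ξ_{ij})`
    (rbar : Fin n → Fin n → ℝ → EuclideanSpace ℝ (Fin 2) × EuclideanSpace ℝ (Fin 2))
    (hrbar : ∀ i j t, rbar i j t = (rq i j t - qr, rξ i j t))
    -- scattering transmission relations along each edge
    (htrans1 : ∀ i j, G.Adj i j → ∀ t : ℝ,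
      (1 / Real.sqrt (2 * σ)) • (p j i t + σ • rbar j i t)
        = (1 / Real.sqrt (2 * σ)) • (-p i j (t - T) + σ • rbar i j (t - T)))
    (htrans2 : ∀ i j, G.Adj i j → ∀ t : ℝ,
      (1 / Real.sqrt (2 * σ)) • (-p i j t - σ • rbar i j t)
        = (1 / Real.sqrt (2 * σ)) • (p j i (t - T) - σ • rbar j i (t - T)))
    -- an orientation of the edge set: each undirected edge of `G` appears exactly once
    (E : Finset (Fin n × Fin n))
    (hE : ∀ i j, G.Adj i j ↔ ((i, j) ∈ E ∨ (j, i) ∈ E))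
    (hE1 : ∀ e ∈ E, (e.2, e.1) ∉ E)
    -- the total storage function
    (S : ℝ → ℝ)
    (hS : ∀ t, S t
      = (1 / (m : ℝ)) * ∑ i, (1 / 2 * ‖q i t - qr‖ ^ 2 + 1 / 2 * ‖ξ i t‖ ^ 2)
        + (1 / (m : ℝ)) * ∑ e ∈ E,
            (1 / 2 * (∫ τ in (t - T)..t,
                (‖((1 / Real.sqrt (2 * σ)) • (-p e.1 e.2 τ + σ • rbar e.1 e.2 τ)).1‖ ^ 2
                  + ‖((1 / Real.sqrt (2 * σ)) • (-p e.1 e.2 τ + σ • rbar e.1 e.2 τ)).2‖ ^ 2))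
              + 1 / 2 * (∫ τ in (t - T)..t,
                (‖((1 / Real.sqrt (2 * σ)) • (p e.2 e.1 τ - σ • rbar e.2 e.1 τ)).1‖ ^ 2
                  + ‖((1 / Real.sqrt (2 * σ)) • (p e.2 e.1 τ - σ • rbar e.2 e.1 τ)).2‖ ^ 2))))
    -- the shifted average position of the accessible robots
    (zbar : ℝ → EuclideanSpace ℝ (Fin 2))
    (hz : ∀ t, zbar t = (1 / (m : ℝ)) • ∑ i ∈ Vh, q i t - qr) :
    ∀ t, HasDerivAt S
        (-(1 / (m : ℝ)) * ∑ i, ∑ j, a i j * ‖q i t - rq i j t‖ ^ 2 + ⟪zbar t, uh t⟫) t ∧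
      -(1 / (m : ℝ)) * ∑ i, ∑ j, a i j * ‖q i t - rq i j t‖ ^ 2 + ⟪zbar t, uh t⟫
        ≤ ⟪zbar t, uh t⟫ :=
  stmt_7_general G a b ha hoff T σ hσ qr Vh hVh m hm δ hδ uh rq rξ hrq hrξ q ξ hξdyn hqdyn p hp rbar
    hrbar htrans1 htrans2 E hE hE1 S hS zbar hz
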